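/- For every integer k ≥ 2 and all integers n ≥ 0 and 0 ≤ h ≤ ⌊n/2⌋, the number of k-noncrossing RNA structures on {1,…,n} with exactly h arcs satisfies S'_k(n,h) = ∑_{j=0}^{h} (−1)^j · binom(n−j, j) · binom(n−2j, 2(h−j)) · f_k(2(h−j), 0). -/

import Mathlib

/-- The arcs form a partial matching: each arc `(i,j)` satisfies `i < j`
and every vertex lies in at most one arc. -/
def IsMatchingArcs (n : ℕ) (A : Finset (Fin n × Fin n)) : Prop :=
  (∀ p ∈ A, p.1 < p.2) ∧
    ∀ p ∈ A, ∀ q ∈ A, p ≠ q →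
      p.1 ≠ q.1 ∧ p.1 ≠ q.2 ∧ p.2 ≠ q.1 ∧ p.2 ≠ q.2

/-- `A` contains `k` mutually crossing arcs
`(i₁,j₁),…,(i_k,j_k)` with `i₁ < ⋯ < i_k < j₁ < ⋯ < j_k`. -/
def HasKCrossing (k n : ℕ) (A : Finset (Fin n × Fin n)) : Prop :=
  ∃ f : Fin k → Fin n × Fin n,
    (∀ i, f i ∈ A) ∧
      StrictMono (fun i => (f i).1) ∧
        StrictMono (fun i => (f i).2) ∧
          ∀ i j, (f i).1 < (f j).2

/-- A `k`-noncrossing digraph on `{1,…,n}`. -/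
def IsKNCDigraph (k n : ℕ) (A : Finset (Fin n × Fin n)) : Prop :=
  IsMatchingArcs n A ∧ ¬ HasKCrossing k n A

/-- The set of isolated (degree `0`) vertices. -/
def IsolatedSet (n : ℕ) (A : Finset (Fin n × Fin n)) : Finset (Fin n) :=
  Finset.univ.filter fun v => ∀ p ∈ A, p.1 ≠ v ∧ p.2 ≠ v

/-- `A` contains a `1`-arc, i.e. an arc of the form `(i, i+1)`. -/
def HasOneArc (n : ℕ) (A : Finset (Fin n × Fin n)) : Prop :=
  ∃ p ∈ A, (p.2 : ℕ) = (p.1 : ℕ) + 1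

/-- A `k`-noncrossing RNA structure on `{1,…,n}`: a `k`-noncrossing digraph
without `1`-arcs. -/
def IsRNAStructure (k n : ℕ) (A : Finset (Fin n × Fin n)) : Prop :=
  IsKNCDigraph k n A ∧ ¬ HasOneArc n A

/-- `fNC k n l` = number of `k`-noncrossing digraphs on `{1,…,n}` with
exactly `l` isolated vertices. -/
noncomputable def fNC (k n l : ℕ) : ℕ :=
  Nat.card {A : Finset (Fin n × Fin n) // IsKNCDigraph k n A ∧ (IsolatedSet n A).card = l}

/-- `SIso k n l` = number of `k`-noncrossing RNA structures on `{1,…,n}` with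
exactly `l` isolated vertices. -/
noncomputable def SIso (k n l : ℕ) : ℕ :=
  Nat.card {A : Finset (Fin n × Fin n) // IsRNAStructure k n A ∧ (IsolatedSet n A).card = l}

/-- `SArc k n h` = number of `k`-noncrossing RNA structures on `{1,…,n}` with
exactly `h` arcs. -/
noncomputable def SArc (k n h : ℕ) : ℕ :=
  Nat.card {A : Finset (Fin n × Fin n) // IsRNAStructure k n A ∧ A.card = h}

/-- `STot k n` = total number of `k`-noncrossing RNA structures on `{1,…,n}`. -/
noncomputable def STot (k n : ℕ) : ℕ :=
  Nat.card {A : Finset (Fin n × Fin n) // IsRNAStructure k n A}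

/-!
Inclusion–exclusion over the `1`-arcs. For `k ≥ 2` a `1`-arc takes part in no `k`-crossing, so
the `k`-noncrossing digraphs with `h` arcs that contain a fixed set `T` of `j` disjoint `1`-arcs
are, after deleting `T`, exactly the `k`-noncrossing digraphs with `h - j` arcs on the `n - 2j`
vertices left uncovered by `T`. A `k`-noncrossing digraph with `r` arcs on `m` vertices is a
choice of its `2r` covered vertices together with a `k`-noncrossing perfect matching on them,
which gives `C(m, 2r) f_k(2r, 0)` of them. Finally, `j` disjoint `1`-arcs on `n` vertices are
determined by their left endpoints, a `j`-subset of `{0, …, n - 2}` without two consecutive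
elements, and there are `C(n - j, j)` of those.
-/

open Finset
open scoped Classical

variable {k m n : ℕ}

def arcSupport (A : Finset (Fin n × Fin n)) : Finset (Fin n) :=
  A.biUnion fun p => {p.1, p.2}

lemma mem_arcSupport {A : Finset (Fin n × Fin n)} {v : Fin n} :
    v ∈ arcSupport A ↔ ∃ p ∈ A, v = p.1 ∨ v = p.2 := by
  simp [arcSupport]

lemma IsMatchingArcs.mono {A B : Finset (Fin n × Fin n)} (hB : IsMatchingArcs n B)
    (hAB : A ⊆ B) : IsMatchingArcs n A :=
  ⟨fun p hp => hB.1 p (hAB hp), fun p hp q hq => hB.2 p (hAB hp) q (hAB hq)⟩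

lemma IsMatchingArcs.card_arcSupport {A : Finset (Fin n × Fin n)} (hA : IsMatchingArcs n A) :
    #(arcSupport A) = 2 * #A := by
  rw [arcSupport, card_biUnion, sum_congr rfl fun p hp => card_pair (hA.1 p hp).ne, sum_const,
    smul_eq_mul, mul_comm]
  intro p hp q hq hpq
  have := hA.2 p hp q hq hpq
  simp only [disjoint_insert_left, disjoint_insert_right, mem_insert, mem_singleton,
    disjoint_singleton_left]
  tauto

lemma IsMatchingArcs.card_isolatedSet {A : Finset (Fin n × Fin n)} (hA : IsMatchingArcs n A) :
    #(IsolatedSet n A) = n - 2 * #A := by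
  have : IsolatedSet n A = (arcSupport A)ᶜ := by
    ext v
    simp only [IsolatedSet, mem_filter, mem_univ, true_and, mem_compl, mem_arcSupport]
    grind
  rw [this, card_compl, Fintype.card_fin, hA.card_arcSupport]

lemma IsMatchingArcs.union {A B : Finset (Fin n × Fin n)} (hA : IsMatchingArcs n A)
    (hB : IsMatchingArcs n B) (hAB : Disjoint (arcSupport A) (arcSupport B)) :
    IsMatchingArcs n (A ∪ B) := by
  have cross :
      ∀ p ∈ A, ∀ q ∈ B, p.1 ≠ q.1 ∧ p.1 ≠ q.2 ∧ p.2 ≠ q.1 ∧ p.2 ≠ q.2 := by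
    intro p hp q hq
    have hpq : ∀ v, v = p.1 ∨ v = p.2 → v = q.1 ∨ v = q.2 → False := fun v hv hv' =>
      disjoint_left.mp hAB (mem_arcSupport.mpr ⟨p, hp, hv⟩)
        (mem_arcSupport.mpr ⟨q, hq, hv'⟩)
    exact ⟨fun h => hpq _ (.inl rfl) (.inl h), fun h => hpq _ (.inl rfl) (.inr h),
      fun h => hpq _ (.inr rfl) (.inl h), fun h => hpq _ (.inr rfl) (.inr h)⟩
  refine ⟨fun p hp => (mem_union.mp hp).elim (hA.1 p) (hB.1 p), fun p hp q hq hpq => ?_⟩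
  rcases mem_union.mp hp with hp | hp <;> rcases mem_union.mp hq with hq | hq
  · exact hA.2 p hp q hq hpq
  · exact cross p hp q hq
  · have := cross q hq p hp
    tauto
  · exact hB.2 p hp q hq hpq

def mapArcs (e : Fin m ↪o Fin n) (A : Finset (Fin m × Fin m)) : Finset (Fin n × Fin n) :=
  A.map (e.toEmbedding.prodMap e.toEmbedding)

lemma mem_mapArcs {e : Fin m ↪o Fin n} {A : Finset (Fin m × Fin m)} {q : Fin n × Fin n} :
    q ∈ mapArcs e A ↔ ∃ p ∈ A, (e p.1, e p.2) = q := by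
  simp [mapArcs]

lemma card_mapArcs (e : Fin m ↪o Fin n) (A : Finset (Fin m × Fin m)) :
    #(mapArcs e A) = #A :=
  card_map _

lemma mapArcs_injective (e : Fin m ↪o Fin n) : Function.Injective (mapArcs e) :=
  map_injective _

lemma arcSupport_mapArcs (e : Fin m ↪o Fin n) (A : Finset (Fin m × Fin m)) :
    arcSupport (mapArcs e A) = (arcSupport A).map e.toEmbedding := by
  ext v
  simp only [mem_arcSupport, mem_mapArcs, mem_map, RelEmbedding.coe_toEmbedding]
  constructor
  · rintro ⟨-, ⟨p, hp, rfl⟩, hv | hv⟩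
    exacts [⟨p.1, ⟨p, hp, .inl rfl⟩, hv.symm⟩, ⟨p.2, ⟨p, hp, .inr rfl⟩, hv.symm⟩]
  · rintro ⟨w, ⟨p, hp, hw | hw⟩, rfl⟩ <;> subst hw
    exacts [⟨_, ⟨p, hp, rfl⟩, .inl rfl⟩, ⟨_, ⟨p, hp, rfl⟩, .inr rfl⟩]

lemma isMatchingArcs_mapArcs_iff {e : Fin m ↪o Fin n} {A : Finset (Fin m × Fin m)} :
    IsMatchingArcs n (mapArcs e A) ↔ IsMatchingArcs m A := by
  simp only [IsMatchingArcs, mapArcs, forall_mem_map, Function.Embedding.coe_prodMap,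
    Prod.map_fst, Prod.map_snd, RelEmbedding.coe_toEmbedding, e.lt_iff_lt, e.injective.ne_iff,
    (e.injective.prodMap e.injective).ne_iff]

lemma hasKCrossing_mapArcs_iff {e : Fin m ↪o Fin n} {A : Finset (Fin m × Fin m)} :
    HasKCrossing k n (mapArcs e A) ↔ HasKCrossing k m A := by
  constructor
  · rintro ⟨f, hfA, hf1, hf2, hf12⟩
    choose g hgA hgf using fun i => mem_mapArcs.mp (hfA i)
    refine ⟨g, hgA, fun i j hij => ?_, fun i j hij => ?_, fun i j => ?_⟩
    · simpa [← hgf] using hf1 hij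
    · simpa [← hgf] using hf2 hij
    · simpa [← hgf] using hf12 i j
  · rintro ⟨f, hfA, hf1, hf2, hf12⟩
    exact ⟨fun i => (e (f i).1, e (f i).2), fun i => mem_mapArcs.mpr ⟨f i, hfA i, rfl⟩,
      fun i j hij => e.strictMono (hf1 hij), fun i j hij => e.strictMono (hf2 hij),
      fun i j => e.strictMono (hf12 i j)⟩

lemma isKNCDigraph_mapArcs_iff {e : Fin m ↪o Fin n} {A : Finset (Fin m × Fin m)} :
    IsKNCDigraph k n (mapArcs e A) ↔ IsKNCDigraph k m A := by
  rw [IsKNCDigraph, IsKNCDigraph, isMatchingArcs_mapArcs_iff, hasKCrossing_mapArcs_iff]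

lemma exists_mapArcs_eq {e : Fin m ↪o Fin n} {A : Finset (Fin n × Fin n)}
    (hA : ↑(arcSupport A) ⊆ Set.range e) : ∃ M, mapArcs e M = A := by
  have : A ⊆ univ.map (e.toEmbedding.prodMap e.toEmbedding) := by
    intro p hp
    obtain ⟨a, ha⟩ := hA (mem_arcSupport.mpr ⟨p, hp, .inl rfl⟩)
    obtain ⟨b, hb⟩ := hA (mem_arcSupport.mpr ⟨p, hp, .inr rfl⟩)
    exact mem_map.mpr ⟨(a, b), mem_univ _, by simp [ha, hb]⟩
  obtain ⟨M, -, hM⟩ := subset_map_iff.mp this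
  exact ⟨M, hM.symm⟩

noncomputable def kncDigraphs (k n r : ℕ) : Finset (Finset (Fin n × Fin n)) :=
  univ.filter fun A => IsKNCDigraph k n A ∧ #A = r

lemma mem_kncDigraphs {r : ℕ} {A : Finset (Fin n × Fin n)} :
    A ∈ kncDigraphs k n r ↔ IsKNCDigraph k n A ∧ #A = r := by
  simp [kncDigraphs]

lemma image_mapArcs_kncDigraphs (e : Fin m ↪o Fin n) (r : ℕ) :
    (kncDigraphs k m r).image (mapArcs e) =
      (kncDigraphs k n r).filter fun A => ↑(arcSupport A) ⊆ Set.range e := by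
  ext A
  simp only [mem_image, mem_filter, mem_kncDigraphs]
  constructor
  · rintro ⟨M, ⟨hM, rfl⟩, rfl⟩
    refine ⟨⟨isKNCDigraph_mapArcs_iff.mpr hM, card_mapArcs e M⟩, ?_⟩
    rw [arcSupport_mapArcs, coe_map]
    exact Set.image_subset_range _ _
  · rintro ⟨⟨hA, rfl⟩, hsupp⟩
    obtain ⟨M, rfl⟩ := exists_mapArcs_eq hsupp
    exact ⟨M, ⟨isKNCDigraph_mapArcs_iff.mp hA, (card_mapArcs e M).symm⟩, rfl⟩

lemma card_kncDigraphs_filter_arcSupport_subset {c : ℕ} (r : ℕ) (V : Finset (Fin n))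
    (hV : #V = c) :
    #((kncDigraphs k n r).filter (arcSupport · ⊆ V)) = #(kncDigraphs k c r) := by
  have := image_mapArcs_kncDigraphs (k := k) (V.orderEmbOfFin hV) r
  simp only [range_orderEmbOfFin, coe_subset] at this
  rw [← this, card_image_of_injective _ (mapArcs_injective _)]

lemma fNC_zero_eq_card_kncDigraphs (k r : ℕ) : fNC k (2 * r) 0 = #(kncDigraphs k (2 * r) r) := by
  rw [fNC, Nat.card_eq_fintype_card, Fintype.card_subtype, kncDigraphs]
  congr 1
  ext A
  simp only [mem_filter, mem_univ, true_and, and_congr_right_iff]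
  intro hA
  have : 2 * #A ≤ 2 * r := by
    simpa [hA.1.card_arcSupport] using card_le_univ (arcSupport A)
  rw [hA.1.card_isolatedSet]
  omega

lemma card_kncDigraphs (k m r : ℕ) :
    #(kncDigraphs k m r) = m.choose (2 * r) * fNC k (2 * r) 0 := by
  have hsupp : ∀ A ∈ kncDigraphs k m r, arcSupport A ∈ powersetCard (2 * r) univ := by
    intro A hA
    obtain ⟨hknc, rfl⟩ := mem_kncDigraphs.mp hA
    simpa using hknc.1.card_arcSupport
  have hfiber : ∀ V ∈ powersetCard (2 * r) (univ : Finset (Fin m)),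
      #((kncDigraphs k m r).filter (arcSupport · = V)) = fNC k (2 * r) 0 := by
    intro V hV
    rw [mem_powersetCard] at hV
    rw [fNC_zero_eq_card_kncDigraphs, ← card_kncDigraphs_filter_arcSupport_subset r V hV.2]
    refine congrArg card (filter_congr fun A hA => ⟨fun h => h.le, fun h => ?_⟩)
    obtain ⟨hknc, rfl⟩ := mem_kncDigraphs.mp hA
    exact eq_of_subset_of_card_le h (by rw [hV.2, hknc.1.card_arcSupport])
  rw [card_eq_sum_card_fiberwise hsupp, sum_congr rfl hfiber, sum_const, card_powersetCard,
    card_univ, Fintype.card_fin, smul_eq_mul]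

lemma HasKCrossing.mono {A B : Finset (Fin n × Fin n)} (h : HasKCrossing k n A) (hAB : A ⊆ B) :
    HasKCrossing k n B := by
  obtain ⟨f, hfA, hf⟩ := h
  exact ⟨f, fun i => hAB (hfA i), hf⟩

-- No endpoint fits strictly between `i` and `i + 1`, so a `1`-arc crosses no other arc.
lemma HasKCrossing.of_union_oneArcs (hk : 2 ≤ k) {A T : Finset (Fin n × Fin n)}
    (hT : ∀ p ∈ T, (p.2 : ℕ) = p.1 + 1) (h : HasKCrossing k n (A ∪ T)) :
    HasKCrossing k n A := by
  obtain ⟨f, hfA, hf1, hf2, hf12⟩ := h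
  refine ⟨f, fun i => (mem_union.mp (hfA i)).resolve_right fun hi => ?_, hf1, hf2, hf12⟩
  have hone := hT _ hi
  have : Nontrivial (Fin k) := Fin.nontrivial_iff_two_le.mpr hk
  obtain ⟨i', hi'⟩ := exists_ne i
  rcases hi'.lt_or_gt with hlt | hlt
  · have h1 : (f i').2 < (f i).2 := hf2 hlt
    have h2 : (f i).1 < (f i').2 := hf12 i i'
    omega
  · have h1 : (f i).1 < (f i').1 := hf1 hlt
    have h2 : (f i').1 < (f i).2 := hf12 i' i
    omega

noncomputable def oneArcs (A : Finset (Fin n × Fin n)) : Finset (Fin n × Fin n) :=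
  A.filter fun p => (p.2 : ℕ) = p.1 + 1

noncomputable def dominoes (n j : ℕ) : Finset (Finset (Fin n × Fin n)) :=
  univ.filter fun T => IsMatchingArcs n T ∧ (∀ p ∈ T, (p.2 : ℕ) = p.1 + 1) ∧ #T = j

lemma mem_dominoes {j : ℕ} {T : Finset (Fin n × Fin n)} :
    T ∈ dominoes n j ↔
      IsMatchingArcs n T ∧ (∀ p ∈ T, (p.2 : ℕ) = p.1 + 1) ∧ #T = j := by
  simp [dominoes]

lemma powersetCard_oneArcs {A : Finset (Fin n × Fin n)} (hA : IsMatchingArcs n A) (j : ℕ) :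
    powersetCard j (oneArcs A) = (dominoes n j).filter (· ⊆ A) := by
  ext T
  simp only [mem_powersetCard, mem_filter, mem_dominoes, oneArcs, subset_iff]
  constructor
  · rintro ⟨hT, rfl⟩
    exact ⟨⟨hA.mono fun p hp => (hT hp).1, fun p hp => (hT hp).2, rfl⟩,
      fun p hp => (hT hp).1⟩
  · rintro ⟨⟨-, hone, rfl⟩, hTA⟩
    exact ⟨fun p hp => ⟨hTA hp, hone p hp⟩, rfl⟩

lemma card_kncDigraphs_filter_superset_eq (hk : 2 ≤ k) {h j : ℕ} {T : Finset (Fin n × Fin n)}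
    (hT : T ∈ dominoes n j) (hjh : j ≤ h) :
    #((kncDigraphs k n h).filter (T ⊆ ·)) =
      #((kncDigraphs k n (h - j)).filter (arcSupport · ⊆ (arcSupport T)ᶜ)) := by
  obtain ⟨hTm, hTone, rfl⟩ := mem_dominoes.mp hT
  have disjoint_of_arcSupport {B : Finset (Fin n × Fin n)}
      (hB : Disjoint (arcSupport B) (arcSupport T)) : Disjoint B T :=
    disjoint_left.mpr fun p hpB hpT => disjoint_left.mp hB
      (mem_arcSupport.mpr ⟨p, hpB, .inl rfl⟩) (mem_arcSupport.mpr ⟨p, hpT, .inl rfl⟩)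
  apply card_nbij' (· \ T) (· ∪ T)
  · intro A hA
    simp only [mem_coe, mem_filter, mem_kncDigraphs] at hA ⊢
    obtain ⟨⟨⟨hAm, hAc⟩, rfl⟩, hTA⟩ := hA
    refine ⟨⟨⟨hAm.mono sdiff_subset, fun hc => hAc (hc.mono sdiff_subset)⟩,
      card_sdiff_of_subset hTA⟩, fun v hv => mem_compl.mpr fun hvT => ?_⟩
    obtain ⟨p, hp, hpv⟩ := mem_arcSupport.mp hv
    obtain ⟨q, hq, hqv⟩ := mem_arcSupport.mp hvT
    have hpq : p ≠ q := by rintro rfl; exact (mem_sdiff.mp hp).2 hq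
    have := hAm.2 p (mem_sdiff.mp hp).1 q (hTA hq) hpq
    rcases hpv with rfl | rfl <;> rcases hqv with h | h <;> tauto
  · intro B hB
    simp only [mem_coe, mem_filter, mem_kncDigraphs] at hB ⊢
    obtain ⟨⟨⟨hBm, hBc⟩, hBcard⟩, hBT⟩ := hB
    have hdisj : Disjoint (arcSupport B) (arcSupport T) := subset_compl_iff_disjoint_right.mp hBT
    refine ⟨⟨⟨hBm.union hTm hdisj, fun hc => hBc (hc.of_union_oneArcs hk hTone)⟩, ?_⟩,
      subset_union_right⟩
    rw [card_union_of_disjoint (disjoint_of_arcSupport hdisj), hBcard]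
    omega
  · intro A hA
    exact sdiff_union_of_subset (mem_filter.mp hA).2
  · intro B hB
    exact union_sdiff_cancel_right
      (disjoint_of_arcSupport (subset_compl_iff_disjoint_right.mp (mem_filter.mp hB).2))

lemma card_kncDigraphs_filter_superset (hk : 2 ≤ k) {h j : ℕ} {T : Finset (Fin n × Fin n)}
    (hT : T ∈ dominoes n j) (hjh : j ≤ h) :
    #((kncDigraphs k n h).filter (T ⊆ ·)) =
      (n - 2 * j).choose (2 * (h - j)) * fNC k (2 * (h - j)) 0 := by
  obtain ⟨hTm, -, hTcard⟩ := mem_dominoes.mp hT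
  have hcompl : #(arcSupport T)ᶜ = n - 2 * j := by
    rw [card_compl, Fintype.card_fin, hTm.card_arcSupport, hTcard]
  rw [card_kncDigraphs_filter_superset_eq hk hT hjh,
    card_kncDigraphs_filter_arcSupport_subset _ _ hcompl, card_kncDigraphs]

/-- The left endpoints of `j` disjoint `1`-arcs on `{0, …, m - 1}`. -/
def dominoStarts (m j : ℕ) : Finset (Finset ℕ) :=
  (powersetCard j (range m)).filter fun S => ∀ a ∈ S, a + 1 < m ∧ a + 1 ∉ S

lemma mem_dominoStarts {m j : ℕ} {S : Finset ℕ} :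
    S ∈ dominoStarts m j ↔ #S = j ∧ ∀ a ∈ S, a + 1 < m ∧ a + 1 ∉ S := by
  simp only [dominoStarts, mem_filter, mem_powersetCard, and_assoc]
  exact and_iff_right_of_imp fun h a ha => mem_range.mpr (by have := (h.2 a ha).1; omega)

lemma dominoStarts_zero_right (m : ℕ) : dominoStarts m 0 = {∅} := by
  simp [dominoStarts]

lemma dominoStarts_eq_empty {m j : ℕ} (hm : m ≤ 1) : dominoStarts m (j + 1) = ∅ := by
  refine eq_empty_of_forall_notMem fun S hS => ?_
  obtain ⟨hcard, hS⟩ := mem_dominoStarts.mp hS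
  obtain ⟨a, ha⟩ := card_pos.mp (by omega : 0 < #S)
  have := (hS a ha).1
  omega

lemma notMem_of_mem_dominoStarts {m j : ℕ} {S : Finset ℕ} (hS : S ∈ dominoStarts m j) :
    m ∉ S := fun hm => by
  have := ((mem_dominoStarts.mp hS).2 m hm).1
  omega

lemma erase_mem_dominoStarts {m j : ℕ} {S : Finset ℕ} (hS : S ∈ dominoStarts (m + 2) (j + 1))
    (hm : m ∈ S) : S.erase m ∈ dominoStarts m j := by
  obtain ⟨hc, hS⟩ := mem_dominoStarts.mp hS
  refine mem_dominoStarts.mpr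
    ⟨by rw [card_erase_of_mem hm, hc, Nat.add_sub_cancel], fun a ha => ?_⟩
  obtain ⟨hne, ha⟩ := mem_erase.mp ha
  have ha' := hS a ha
  have : a + 1 ≠ m := fun h => ha'.2 (h ▸ hm)
  exact ⟨by omega, fun h => ha'.2 (mem_of_mem_erase h)⟩

lemma insert_mem_dominoStarts {m j : ℕ} {S : Finset ℕ} (hS : S ∈ dominoStarts m j) :
    insert m S ∈ dominoStarts (m + 2) (j + 1) := by
  have hm := notMem_of_mem_dominoStarts hS
  obtain ⟨hc, hS⟩ := mem_dominoStarts.mp hS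
  refine mem_dominoStarts.mpr ⟨by rw [card_insert_of_notMem hm, hc], fun a ha => ?_⟩
  rcases mem_insert.mp ha with rfl | ha
  · refine ⟨by omega, fun h => ?_⟩
    rcases mem_insert.mp h with h | h
    · omega
    · have := (hS _ h).1
      omega
  · have ha' := hS a ha
    refine ⟨by omega, fun h => ?_⟩
    rcases mem_insert.mp h with h | h
    · omega
    · exact ha'.2 h

lemma filter_notMem_dominoStarts (m j : ℕ) :
    (dominoStarts (m + 2) (j + 1)).filter (m ∉ ·) = dominoStarts (m + 1) (j + 1) := by
  ext S
  simp only [mem_filter, mem_dominoStarts]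
  constructor
  · rintro ⟨⟨hc, hS⟩, hm⟩
    refine ⟨hc, fun a ha => ⟨?_, (hS a ha).2⟩⟩
    have : a ≠ m := fun h => hm (h ▸ ha)
    have := (hS a ha).1
    omega
  · rintro ⟨hc, hS⟩
    refine ⟨⟨hc, fun a ha => ⟨by have := (hS a ha).1; omega, (hS a ha).2⟩⟩,
      fun hm => ?_⟩
    have := (hS m hm).1
    omega

lemma card_dominoStarts_add_two (m j : ℕ) :
    #(dominoStarts (m + 2) (j + 1)) = #(dominoStarts (m + 1) (j + 1)) + #(dominoStarts m j) := by
  have hwith : #((dominoStarts (m + 2) (j + 1)).filter (m ∈ ·)) = #(dominoStarts m j) :=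
    card_nbij' (·.erase m) (insert m)
      (fun _ hS => erase_mem_dominoStarts (mem_filter.mp hS).1 (mem_filter.mp hS).2)
      (fun _ hS => mem_filter.mpr ⟨insert_mem_dominoStarts hS, mem_insert_self _ _⟩)
      (fun _ hS => insert_erase (mem_filter.mp hS).2)
      (fun _ hS => erase_insert (notMem_of_mem_dominoStarts hS))
  rw [← card_filter_add_card_filter_not (m ∈ ·), hwith, filter_notMem_dominoStarts, add_comm]

lemma card_dominoStarts : ∀ m j, #(dominoStarts m j) = (m - j).choose j
  | m, 0 => by simp [dominoStarts_zero_right]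
  | 0, j + 1 => by simp [dominoStarts_eq_empty]
  | 1, j + 1 => by simp [dominoStarts_eq_empty]
  | m + 2, j + 1 => by
    rw [card_dominoStarts_add_two, card_dominoStarts (m + 1) (j + 1), card_dominoStarts m j]
    rcases le_or_gt j m with hjm | hmj
    · rw [show m + 2 - (j + 1) = m - j + 1 by omega, show m + 1 - (j + 1) = m - j by omega,
        Nat.choose_succ_succ', add_comm]
    · rw [Nat.choose_eq_zero_of_lt (by omega : m + 1 - (j + 1) < j + 1),
        Nat.choose_eq_zero_of_lt (by omega : m - j < j),
        Nat.choose_eq_zero_of_lt (by omega : m + 2 - (j + 1) < j + 1)]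

lemma eq_of_oneArc_of_fst_eq {p q : Fin n × Fin n} (hp : (p.2 : ℕ) = p.1 + 1)
    (hq : (q.2 : ℕ) = q.1 + 1) (h : (p.1 : ℕ) = q.1) : p = q :=
  Prod.ext (Fin.ext h) (Fin.ext (by rw [hp, hq, h]))

lemma injOn_fst_of_oneArcs {T : Finset (Fin n × Fin n)} (hT : ∀ p ∈ T, (p.2 : ℕ) = p.1 + 1) :
    Set.InjOn (fun p : Fin n × Fin n => (p.1 : ℕ)) T := fun p hp q hq =>
  eq_of_oneArc_of_fst_eq (hT p hp) (hT q hq)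

noncomputable def dominoOfStarts (S : Finset ℕ) : Finset (Fin n × Fin n) :=
  univ.filter fun p => (p.1 : ℕ) ∈ S ∧ (p.2 : ℕ) = p.1 + 1

lemma image_fst_dominoOfStarts {S : Finset ℕ} (hS : ∀ a ∈ S, a + 1 < n) :
    (dominoOfStarts (n := n) S).image (fun p => (p.1 : ℕ)) = S := by
  ext a
  simp only [dominoOfStarts, mem_filter, mem_univ, true_and, mem_image]
  refine ⟨fun ⟨p, ⟨hp, _⟩, hpa⟩ => hpa ▸ hp, fun ha => ?_⟩
  have := hS a ha
  exact ⟨(⟨a, by omega⟩, ⟨a + 1, this⟩), ⟨ha, rfl⟩, rfl⟩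

lemma dominoOfStarts_image_fst {T : Finset (Fin n × Fin n)}
    (hT : ∀ p ∈ T, (p.2 : ℕ) = p.1 + 1) :
    dominoOfStarts (T.image fun p => (p.1 : ℕ)) = T := by
  ext p
  simp only [dominoOfStarts, mem_filter, mem_univ, true_and, mem_image]
  refine ⟨fun ⟨⟨q, hq, hqp⟩, hp⟩ => ?_, fun hp => ⟨⟨p, hp, rfl⟩, hT p hp⟩⟩
  rwa [← eq_of_oneArc_of_fst_eq (hT q hq) hp hqp]

lemma image_fst_mem_dominoStarts {j : ℕ} {T : Finset (Fin n × Fin n)} (hT : T ∈ dominoes n j) :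
    T.image (fun p => (p.1 : ℕ)) ∈ dominoStarts n j := by
  obtain ⟨hTm, hTone, rfl⟩ := mem_dominoes.mp hT
  refine mem_dominoStarts.mpr ⟨card_image_of_injOn (injOn_fst_of_oneArcs hTone), ?_⟩
  simp only [mem_image]
  rintro _ ⟨p, hp, rfl⟩
  refine ⟨by have := hTone p hp; omega, ?_⟩
  rintro ⟨q, hq, hqp⟩
  have hpq : p ≠ q := by rintro rfl; omega
  exact (hTm.2 p hp q hq hpq).2.2.1 (Fin.ext (by rw [hTone p hp, hqp]))

lemma dominoOfStarts_mem_dominoes {j : ℕ} {S : Finset ℕ} (hS : S ∈ dominoStarts n j) :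
    dominoOfStarts S ∈ dominoes n j := by
  obtain ⟨hScard, hS⟩ := mem_dominoStarts.mp hS
  have hone : ∀ p ∈ dominoOfStarts (n := n) S, (p.2 : ℕ) = p.1 + 1 :=
    fun p hp => (mem_filter.mp hp).2.2
  refine mem_dominoes.mpr ⟨⟨fun p hp => ?_, fun p hp q hq hpq => ?_⟩, hone, ?_⟩
  · have := hone p hp
    exact Fin.lt_def.mpr (by omega)
  · obtain ⟨hpS, hp2⟩ := (mem_filter.mp hp).2
    obtain ⟨hqS, hq2⟩ := (mem_filter.mp hq).2
    have h11 : (p.1 : ℕ) ≠ q.1 := fun h => hpq (eq_of_oneArc_of_fst_eq hp2 hq2 h)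
    have h12 : (p.1 : ℕ) ≠ q.2 := fun h => (hS _ hqS).2 (hq2 ▸ h ▸ hpS)
    have h21 : (p.2 : ℕ) ≠ q.1 := fun h => (hS _ hpS).2 (hp2 ▸ h ▸ hqS)
    refine ⟨fun h => h11 (congrArg Fin.val h), fun h => h12 (congrArg Fin.val h),
      fun h => h21 (congrArg Fin.val h), fun h => h11 ?_⟩
    have := congrArg Fin.val h
    omega
  · rw [← card_image_of_injOn (injOn_fst_of_oneArcs hone),
      image_fst_dominoOfStarts fun a ha => (hS a ha).1, hScard]

lemma card_dominoes (n j : ℕ) : #(dominoes n j) = (n - j).choose j := by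
  rw [← card_dominoStarts]
  exact card_nbij' (fun T => T.image fun p => (p.1 : ℕ)) dominoOfStarts
    (fun _ hT => image_fst_mem_dominoStarts hT) (fun _ hS => dominoOfStarts_mem_dominoes hS)
    (fun _ hT => dominoOfStarts_image_fst (mem_dominoes.mp hT).2.1)
    (fun _ hS => image_fst_dominoOfStarts fun a ha => ((mem_dominoStarts.mp hS).2 a ha).1)

lemma sum_card_powersetCard_oneArcs (hk : 2 ≤ k) {h j : ℕ} (hjh : j ≤ h) :
    ∑ A ∈ kncDigraphs k n h, #(powersetCard j (oneArcs A)) =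
      (n - j).choose j * ((n - 2 * j).choose (2 * (h - j)) * fNC k (2 * (h - j)) 0) := by
  calc ∑ A ∈ kncDigraphs k n h, #(powersetCard j (oneArcs A))
      = ∑ A ∈ kncDigraphs k n h, #((dominoes n j).filter (· ⊆ A)) :=
        sum_congr rfl fun A hA => by rw [powersetCard_oneArcs (mem_kncDigraphs.mp hA).1.1]
    _ = ∑ T ∈ dominoes n j, #((kncDigraphs k n h).filter (T ⊆ ·)) := by
        simp only [card_filter]
        exact sum_comm
    _ = _ := by
        rw [sum_congr rfl fun T hT => card_kncDigraphs_filter_superset hk hT hjh, sum_const,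
          card_dominoes, smul_eq_mul]

lemma sum_range_alternating_choose_of_le {m h : ℕ} (hmh : m ≤ h) :
    ∑ j ∈ range (h + 1), (-1 : ℤ) ^ j * m.choose j = if m = 0 then 1 else 0 := by
  rw [← Int.alternating_sum_range_choose]
  refine (sum_subset (range_subset_range.mpr (by omega)) fun j _ hj => ?_).symm
  rw [Nat.choose_eq_zero_of_lt (by simpa using hj), Nat.cast_zero, mul_zero]

lemma SArc_eq_card_filter (k n h : ℕ) :
    SArc k n h = #((kncDigraphs k n h).filter fun A => #(oneArcs A) = 0) := by
  rw [SArc, Nat.card_eq_fintype_card, Fintype.card_subtype, kncDigraphs, filter_filter]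
  congr 1
  ext A
  simp only [mem_filter, mem_univ, true_and, IsRNAStructure, HasOneArc, oneArcs, card_eq_zero,
    filter_eq_empty_iff, not_exists, not_and]
  tauto

theorem stmt5_general (k n h : ℕ) (hk : 2 ≤ k) :
    (SArc k n h : ℤ) =
      ∑ j ∈ Finset.range (h + 1),
        (-1 : ℤ) ^ j * (Nat.choose (n - j) j : ℤ) *
          (Nat.choose (n - 2 * j) (2 * (h - j)) : ℤ) * (fNC k (2 * (h - j)) 0 : ℤ) := by
  calc (SArc k n h : ℤ)
      = ∑ A ∈ kncDigraphs k n h, if #(oneArcs A) = 0 then 1 else 0 := by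
        rw [SArc_eq_card_filter, card_filter]
        push_cast
        rfl
    _ = ∑ A ∈ kncDigraphs k n h,
          ∑ j ∈ range (h + 1), (-1 : ℤ) ^ j * #(powersetCard j (oneArcs A)) := by
        refine sum_congr rfl fun A hA => ?_
        simp only [card_powersetCard]
        rw [sum_range_alternating_choose_of_le]
        exact (card_le_card (filter_subset _ A)).trans (mem_kncDigraphs.mp hA).2.le
    _ = ∑ j ∈ range (h + 1),
          (-1 : ℤ) ^ j * ∑ A ∈ kncDigraphs k n h, (#(powersetCard j (oneArcs A)) : ℤ) := by
        rw [sum_comm]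
        simp_rw [mul_sum]
    _ = _ := sum_congr rfl fun j hj => by
        rw [← Nat.cast_sum,
          sum_card_powersetCard_oneArcs hk (Nat.lt_succ_iff.mp (mem_range.mp hj))]
        push_cast
        ring

/-- `S'_k(n,h) = ∑_{j=0}^{h} (−1)^j C(n−j,j) C(n−2j, 2(h−j)) f_k(2(h−j),0)`. -/
theorem stmt5 (k n h : ℕ) (hk : 2 ≤ k) (hh : h ≤ n / 2) :
    (SArc k n h : ℤ) =
      ∑ j ∈ Finset.range (h + 1),
        (-1 : ℤ) ^ j * (Nat.choose (n - j) j : ℤ) *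
          (Nat.choose (n - 2 * j) (2 * (h - j)) : ℤ) * (fNC k (2 * (h - j)) 0 : ℤ) :=
  stmt5_general k n h hk
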